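/- The value-function operators solve the periodic Riccati-type equation. Let (Q_j)_{j∈ℕ⁺} ∈ M_{ħ,≫}(H) and (R_j)_{j∈ℕ⁺} ∈ M_{ħ,≫}(U), assume U_ad(x_0) ≠ ∅ for every x_0 ∈ H, and let P_ℓ ∈ SL_+(H), ℓ = 0,1,…,ħ, be the operators with V(x_0;ℓ) = ⟨P_ℓ x_0, x_0⟩_H for all x_0 ∈ H. Then {P_ℓ}_{ℓ=0}^{ħ} is a solution of the periodic Riccati-type equation (in particular P_0 = P_ħ). -/

import Mathlib

open scoped RealInnerProductSpace
noncomputable section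

namespace ImpulseControl

/-- adjoint of a continuous linear map between real Hilbert spaces -/
def adj {E F : Type*} [NormedAddCommGroup E] [InnerProductSpace ℝ E] [CompleteSpace E]
    [NormedAddCommGroup F] [InnerProductSpace ℝ F] [CompleteSpace F]
    (f : E →L[ℝ] F) : F →L[ℝ] E :=
  ContinuousLinearMap.adjoint f

/-- `ν(j) = j - [j/ħ]·ħ ∈ {1,…,ħ}` (where `[s] = max {k ∈ ℕ : k < s}`):
equals `ħ` when `ħ ∣ j`, else `j % ħ`. -/
def nu (hbar j : ℕ) : ℕ := if j % hbar = 0 then hbar else j % hbar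

variable {H U : Type*} [NormedAddCommGroup H] [InnerProductSpace ℝ H] [CompleteSpace H]
  [NormedAddCommGroup U] [InnerProductSpace ℝ U] [CompleteSpace U]

/-- a bounded self-adjoint nonnegative operator: membership in `SL₊` -/
def IsNonnegOp {E : Type*} [NormedAddCommGroup E] [InnerProductSpace ℝ E] [CompleteSpace E]
    (P : E →L[ℝ] E) : Prop :=
  IsSelfAdjoint P ∧ ∀ x : E, 0 ≤ ⟪P x, x⟫

/-- membership in `SL_≫`: self-adjoint, nonnegative and coercive -/
def IsCoerciveOp {E : Type*} [NormedAddCommGroup E] [InnerProductSpace ℝ E] [CompleteSpace E]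
    (P : E →L[ℝ] E) : Prop :=
  IsNonnegOp P ∧ ∃ δ : ℝ, 0 < δ ∧ ∀ x : E, δ * ‖x‖ ^ 2 ≤ ⟪P x, x⟫

/-- `M_{ħ,+}`: an `ħ`-periodic sequence of self-adjoint nonnegative operators (indices `j ≥ 1`). -/
def MemMPlus {E : Type*} [NormedAddCommGroup E] [InnerProductSpace ℝ E] [CompleteSpace E]
    (hbar : ℕ) (Q : ℕ → E →L[ℝ] E) : Prop :=
  (∀ j : ℕ, 1 ≤ j → IsNonnegOp (Q j)) ∧ ∀ j : ℕ, 1 ≤ j → Q (j + hbar) = Q j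

/-- `M_{ħ,≫}`: an `ħ`-periodic sequence of self-adjoint coercive operators (indices `j ≥ 1`). -/
def MemMCoercive {E : Type*} [NormedAddCommGroup E] [InnerProductSpace ℝ E] [CompleteSpace E]
    (hbar : ℕ) (Q : ℕ → E →L[ℝ] E) : Prop :=
  (∀ j : ℕ, 1 ≤ j → IsCoerciveOp (Q j)) ∧ ∀ j : ℕ, 1 ≤ j → Q (j + hbar) = Q j

section Defs

variable (T : ℝ → H →L[ℝ] H) (t : ℕ → ℝ) (hbar : ℕ) (B : ℕ → U →L[ℝ] H)

/-- post-impulse states: `xplusFrom T t ħ B ℓ x0 u m = x(t_{ℓ+m}^+ ; x0, u, ℓ)`. -/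
def xplusFrom (ℓ : ℕ) (x0 : H) (u : ℕ → U) : ℕ → H
  | 0 => x0
  | m + 1 => T (t (ℓ + m + 1) - t (ℓ + m)) (xplusFrom ℓ x0 u m)
      + B (nu hbar (ℓ + m + 1)) (u (ℓ + m + 1))

/-- pre-impulse states: `xtrajFrom T t ħ B ℓ x0 u m = x(t_{ℓ+m} ; x0, u, ℓ)` for `m ≥ 1`. -/
def xtrajFrom (ℓ : ℕ) (x0 : H) (u : ℕ → U) : ℕ → H
  | 0 => x0
  | m + 1 => T (t (ℓ + m + 1) - t (ℓ + m)) (xplusFrom T t hbar B ℓ x0 u m)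

/-- `x(t_j^+ ; x0, u)` -/
def xplus (x0 : H) (u : ℕ → U) : ℕ → H := xplusFrom T t hbar B 0 x0 u

/-- `x(t_j ; x0, u)` for `j ≥ 1` -/
def xtraj (x0 : H) (u : ℕ → U) : ℕ → H := xtrajFrom T t hbar B 0 x0 u

/-- the shifted admissible control set `U_ad(x0; ℓ)`; `U_ad(x0) = UadFrom T t ħ B 0 x0` -/
def UadFrom (ℓ : ℕ) (x0 : H) : Set (ℕ → U) :=
  {u | Summable (fun j : ℕ => ‖u (ℓ + j + 1)‖ ^ 2) ∧
       Summable (fun j : ℕ => ‖xtrajFrom T t hbar B ℓ x0 u (j + 1)‖ ^ 2)}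

/-- exponential `ħ`-stabilizability of `[A, B_ħ, Λ_ħ]` by an `ħ`-periodic feedback law:
every closed-loop trajectory decays like `C e^{-μ t}`. -/
def ExpStabilizable : Prop :=
  ∃ F : ℕ → H →L[ℝ] U, ∃ C μ : ℝ, 0 < C ∧ 0 < μ ∧
    ∀ (x0 : H) (u : ℕ → U),
      (∀ j : ℕ, 1 ≤ j → u j = F (nu hbar j) (xtraj T t hbar B x0 u j)) →
      ∀ (j : ℕ) (s : ℝ), t j < s → s ≤ t (j + 1) →
        ‖T (s - t j) (xplus T t hbar B x0 u j)‖ ≤ C * Real.exp (-μ * s) * ‖x0‖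

/-- the infinite-horizon cost `J(u; x0, ℓ)` -/
def Jinf (Q : ℕ → H →L[ℝ] H) (R : ℕ → U →L[ℝ] U) (ℓ : ℕ) (x0 : H) (u : ℕ → U) : ℝ :=
  ∑' m : ℕ,
    (⟪Q (ℓ + m + 1) (xtrajFrom T t hbar B ℓ x0 u (m + 1)), xtrajFrom T t hbar B ℓ x0 u (m + 1)⟫
      + ⟪R (ℓ + m + 1) (u (ℓ + m + 1)), u (ℓ + m + 1)⟫)

/-- the infinite-horizon value function `V(x0; ℓ)` -/
def Vinf (Q : ℕ → H →L[ℝ] H) (R : ℕ → U →L[ℝ] U) (ℓ : ℕ) (x0 : H) : ℝ :=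
  sInf {c : ℝ | ∃ u ∈ UadFrom T t hbar B ℓ x0, c = Jinf T t hbar B Q R ℓ x0 u}

/-- the finite-horizon cost `J(u; x0, ℓ, k̂)` with terminal weight `M` -/
def Jfin (Q : ℕ → H →L[ℝ] H) (R : ℕ → U →L[ℝ] U) (M : H →L[ℝ] H)
    (ℓ khat : ℕ) (x0 : H) (u : ℕ → U) : ℝ :=
  (∑ m ∈ Finset.Icc 1 (khat - ℓ),
    (⟪Q (ℓ + m) (xtrajFrom T t hbar B ℓ x0 u m), xtrajFrom T t hbar B ℓ x0 u m⟫
      + ⟪R (ℓ + m) (u (ℓ + m)), u (ℓ + m)⟫))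
  + ⟪M (xplusFrom T t hbar B ℓ x0 u (khat - ℓ)), xplusFrom T t hbar B ℓ x0 u (khat - ℓ)⟫

/-- the finite-horizon value function `V(x0; ℓ, k̂)` with terminal weight `M` -/
def Vfin (Q : ℕ → H →L[ℝ] H) (R : ℕ → U →L[ℝ] U) (M : H →L[ℝ] H)
    (ℓ khat : ℕ) (x0 : H) : ℝ :=
  sInf {c : ℝ | ∃ u : ℕ → U, Summable (fun j : ℕ => ‖u (ℓ + j + 1)‖ ^ 2) ∧
    c = Jfin T t hbar B Q R M ℓ khat x0 u}

/-- the `k`-th equation of the periodic Riccati-type system, where `G` is the (two-sided)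
inverse of `R_k + B_k* P_k B_k`. -/
def RicEq (Q : ℕ → H →L[ℝ] H) (R : ℕ → U →L[ℝ] U) (P : ℕ → H →L[ℝ] H)
    (G : U →L[ℝ] U) (k : ℕ) : Prop :=
  G ∘L (R k + adj (B k) ∘L P k ∘L B k) = 1 ∧
  (R k + adj (B k) ∘L P k ∘L B k) ∘L G = 1 ∧
  P (k - 1) - adj (T (t k - t (k - 1))) ∘L P k ∘L T (t k - t (k - 1)) =
    adj (T (t k - t (k - 1))) ∘L Q k ∘L T (t k - t (k - 1))
      - adj (T (t k - t (k - 1))) ∘L P k ∘L B k ∘L G ∘L adj (B k) ∘L P k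
          ∘L T (t k - t (k - 1))

/-- `P_0, …, P_ħ` is a solution of the periodic Riccati-type equation. -/
def IsRicSol (Q : ℕ → H →L[ℝ] H) (R : ℕ → U →L[ℝ] U) (P : ℕ → H →L[ℝ] H) : Prop :=
  (∀ k : ℕ, k ≤ hbar → IsNonnegOp (P k)) ∧ P 0 = P hbar ∧
  ∀ k : ℕ, 1 ≤ k → k ≤ hbar → ∃ G : U →L[ℝ] U, RicEq T t B Q R P G k

end Defs

section Aux

variable {H U : Type*} [NormedAddCommGroup H] [InnerProductSpace ℝ H] [CompleteSpace H]
  [NormedAddCommGroup U] [InnerProductSpace ℝ U] [CompleteSpace U]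

/-- quadratic forms of symmetric operators determine them -/
lemma eq_of_sym_forms {E : Type*} [NormedAddCommGroup E] [InnerProductSpace ℝ E]
    (A B : E →L[ℝ] E) (hA : ∀ x y : E, ⟪A x, y⟫ = ⟪x, A y⟫)
    (hB : ∀ x y : E, ⟪B x, y⟫ = ⟪x, B y⟫)
    (h : ∀ x : E, ⟪A x, x⟫ = ⟪B x, x⟫) : A = B := by
  ext x
  have key : ∀ y : E, ⟪A x - B x, y⟫ = 0 := by
    intro y
    have h2 := h (x + y)
    have hAx : ⟪A y, x⟫ = ⟪A x, y⟫ := by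
      rw [hA y x, real_inner_comm]
    have hBx : ⟪B y, x⟫ = ⟪B x, y⟫ := by
      rw [hB y x, real_inner_comm]
    simp only [map_add, inner_add_left, inner_add_right] at h2
    rw [h x, h y, hAx, hBx] at h2
    have : ⟪A x, y⟫ = ⟪B x, y⟫ := by linarith
    rw [inner_sub_left, this, sub_self]
  have := key (A x - B x)
  rw [inner_self_eq_zero, sub_eq_zero] at this
  exact this

lemma sym_of_selfAdjoint {E : Type*} [NormedAddCommGroup E] [InnerProductSpace ℝ E]
    [CompleteSpace E] {A : E →L[ℝ] E} (hA : IsSelfAdjoint A) :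
    ∀ x y : E, ⟪A x, y⟫ = ⟪x, A y⟫ := by
  intro x y
  conv_lhs => rw [← ContinuousLinearMap.isSelfAdjoint_iff'.mp hA]
  exact ContinuousLinearMap.adjoint_inner_left A y x

lemma nu_eq_self {hbar k : ℕ} (hk1 : 1 ≤ k) (hk2 : k ≤ hbar) : nu hbar k = k := by
  unfold nu
  rcases eq_or_lt_of_le hk2 with rfl | h
  · simp
  · rw [Nat.mod_eq_of_lt h]
    have : k ≠ 0 := by omega
    simp [this]

lemma nu_add_hbar {hbar j : ℕ} : nu hbar (j + hbar) = nu hbar j := by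
  unfold nu
  rw [Nat.add_mod_right]

/-- a periodic family of operators is norm-bounded on `j ≥ 1` -/
lemma periodic_norm_bound {E F : Type*} [NormedAddCommGroup E] [NormedAddCommGroup F]
    [NormedSpace ℝ E] [NormedSpace ℝ F]
    {hbar : ℕ} (hhbar : 0 < hbar) (Q : ℕ → E →L[ℝ] F)
    (hper : ∀ j : ℕ, 1 ≤ j → Q (j + hbar) = Q j) :
    ∃ C : ℝ, ∀ j : ℕ, 1 ≤ j → ‖Q j‖ ≤ C := by
  have hne : (Finset.Icc 1 hbar).Nonempty := ⟨1, by simp; omega⟩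
  refine ⟨(Finset.Icc 1 hbar).sup' hne (fun i => ‖Q i‖), ?_⟩
  intro j
  induction j using Nat.strong_induction_on with
  | _ j ih =>
    intro hj
    by_cases hle : j ≤ hbar
    · exact Finset.le_sup' (fun i => ‖Q i‖) (Finset.mem_Icc.mpr ⟨hj, hle⟩)
    · have h1 : 1 ≤ j - hbar := by omega
      have : Q j = Q (j - hbar) := by
        have := hper (j - hbar) h1
        rwa [Nat.sub_add_cancel (by omega)] at this
      rw [this]
      exact ih (j - hbar) (by omega) h1

section TrajLemmas

variable (T : ℝ → H →L[ℝ] H) (t : ℕ → ℝ) (hbar : ℕ) (B : ℕ → U →L[ℝ] H)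

lemma xplusFrom_succ (ℓ : ℕ) (x0 : H) (u : ℕ → U) (m : ℕ) :
    xplusFrom T t hbar B ℓ x0 u (m + 1) =
      T (t (ℓ + m + 1) - t (ℓ + m)) (xplusFrom T t hbar B ℓ x0 u m)
        + B (nu hbar (ℓ + m + 1)) (u (ℓ + m + 1)) := rfl

lemma xtrajFrom_succ (ℓ : ℕ) (x0 : H) (u : ℕ → U) (m : ℕ) :
    xtrajFrom T t hbar B ℓ x0 u (m + 1) =
      T (t (ℓ + m + 1) - t (ℓ + m)) (xplusFrom T t hbar B ℓ x0 u m) := rfl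

lemma xplusFrom_congr (ℓ : ℕ) (x0 : H) (u u' : ℕ → U)
    (h : ∀ j, ℓ + 1 ≤ j → u j = u' j) :
    ∀ m, xplusFrom T t hbar B ℓ x0 u m = xplusFrom T t hbar B ℓ x0 u' m := by
  intro m
  induction m with
  | zero => rfl
  | succ m ih =>
    rw [xplusFrom_succ, xplusFrom_succ, ih, h _ (by omega)]

lemma xtrajFrom_congr (ℓ : ℕ) (x0 : H) (u u' : ℕ → U)
    (h : ∀ j, ℓ + 1 ≤ j → u j = u' j) (m : ℕ) :
    xtrajFrom T t hbar B ℓ x0 u m = xtrajFrom T t hbar B ℓ x0 u' m := by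
  cases m with
  | zero => rfl
  | succ m => rw [xtrajFrom_succ, xtrajFrom_succ, xplusFrom_congr T t hbar B ℓ x0 u u' h m]

lemma xplusFrom_restart (ℓ n : ℕ) (x0 : H) (u : ℕ → U) :
    ∀ m, xplusFrom T t hbar B ℓ x0 u (n + m) =
      xplusFrom T t hbar B (ℓ + n) (xplusFrom T t hbar B ℓ x0 u n) u m := by
  intro m
  induction m with
  | zero => rfl
  | succ m ih =>
    have e1 : ℓ + (n + m) = ℓ + n + m := by omega
    rw [show n + (m + 1) = (n + m) + 1 from rfl, xplusFrom_succ, xplusFrom_succ, ih, e1]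

lemma xtrajFrom_restart (ℓ n : ℕ) (x0 : H) (u : ℕ → U) (m : ℕ) :
    xtrajFrom T t hbar B ℓ x0 u (n + m + 1) =
      xtrajFrom T t hbar B (ℓ + n) (xplusFrom T t hbar B ℓ x0 u n) u (m + 1) := by
  rw [xtrajFrom_succ, xtrajFrom_succ, xplusFrom_restart T t hbar B ℓ n x0 u m]
  have e1 : ℓ + (n + m) = ℓ + n + m := by omega
  rw [e1]

lemma xplusFrom_shift (htper : ∀ j : ℕ, t (j + hbar) = t j + t hbar)
    (ℓ : ℕ) (x0 : H) (u : ℕ → U) :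
    ∀ m, xplusFrom T t hbar B (ℓ + hbar) x0 u m =
      xplusFrom T t hbar B ℓ x0 (fun j => u (j + hbar)) m := by
  intro m
  induction m with
  | zero => rfl
  | succ m ih =>
    rw [xplusFrom_succ, xplusFrom_succ, ih]
    have e1 : ℓ + hbar + m = ℓ + m + hbar := by omega
    have e2 : ℓ + m + hbar + 1 = ℓ + m + 1 + hbar := by omega
    rw [e1, e2, htper, htper, nu_add_hbar]
    have e3 : t (ℓ + m + 1) + t hbar - (t (ℓ + m) + t hbar) = t (ℓ + m + 1) - t (ℓ + m) := by
      ring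
    rw [e3]

lemma xtrajFrom_shift (htper : ∀ j : ℕ, t (j + hbar) = t j + t hbar)
    (ℓ : ℕ) (x0 : H) (u : ℕ → U) (m : ℕ) :
    xtrajFrom T t hbar B (ℓ + hbar) x0 u m =
      xtrajFrom T t hbar B ℓ x0 (fun j => u (j + hbar)) m := by
  cases m with
  | zero => rfl
  | succ m =>
    rw [xtrajFrom_succ, xtrajFrom_succ, xplusFrom_shift T t hbar B htper ℓ x0 u m]
    have e1 : ℓ + hbar + m = ℓ + m + hbar := by omega
    have e2 : ℓ + m + hbar + 1 = ℓ + m + 1 + hbar := by omega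
    rw [e1, e2, htper, htper]
    have e3 : t (ℓ + m + 1) + t hbar - (t (ℓ + m) + t hbar) = t (ℓ + m + 1) - t (ℓ + m) := by
      ring
    rw [e3]

lemma xplusFrom_coast (hT0 : T 0 = 1)
    (hTadd : ∀ a b : ℝ, 0 ≤ a → 0 ≤ b → T (a + b) = T a ∘L T b)
    (htmono : StrictMono t)
    (ℓ : ℕ) (x0 : H) (u : ℕ → U) (hu : ∀ j, ℓ < j → j ≤ hbar → u j = 0) :
    ∀ m, ℓ + m ≤ hbar → xplusFrom T t hbar B ℓ x0 u m = T (t (ℓ + m) - t ℓ) x0 := by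
  intro m
  induction m with
  | zero => intro _; simp [xplusFrom, hT0]
  | succ m ih =>
    intro hm
    rw [xplusFrom_succ, ih (by omega), hu (ℓ + m + 1) (by omega) (by omega), map_zero, add_zero]
    have h1 : (0:ℝ) ≤ t (ℓ + m + 1) - t (ℓ + m) := by
      have := htmono.monotone (show ℓ + m ≤ ℓ + m + 1 by omega)
      linarith
    have h2 : (0:ℝ) ≤ t (ℓ + m) - t ℓ := by
      have := htmono.monotone (show ℓ ≤ ℓ + m by omega)
      linarith
    have := hTadd _ _ h1 h2
    rw [show t (ℓ + m + 1) - t (ℓ + m) + (t (ℓ + m) - t ℓ) = t (ℓ + m + 1) - t ℓ by ring] at this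
    rw [show ℓ + (m + 1) = ℓ + m + 1 from rfl, this]
    rfl

end TrajLemmas

section CostLemmas

variable (T : ℝ → H →L[ℝ] H) (t : ℕ → ℝ) (hbar : ℕ) (B : ℕ → U →L[ℝ] H)
  (Q : ℕ → H →L[ℝ] H) (R : ℕ → U →L[ℝ] U)

lemma summable_inner_of_bound {E : Type*} [NormedAddCommGroup E] [InnerProductSpace ℝ E]
    (A : ℕ → E →L[ℝ] E) (C : ℝ) (hC : ∀ j, 1 ≤ j → ‖A j‖ ≤ C) (ℓ : ℕ) (v : ℕ → E)
    (hv : Summable (fun m : ℕ => ‖v m‖ ^ 2)) :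
    Summable (fun m : ℕ => ⟪A (ℓ + m + 1) (v m), v m⟫) := by
  apply Summable.of_abs
  refine Summable.of_nonneg_of_le (fun m => abs_nonneg _) (fun m => ?_) (hv.mul_left C)
  ·
    calc |⟪A (ℓ + m + 1) (v m), v m⟫| ≤ ‖A (ℓ + m + 1) (v m)‖ * ‖v m‖ :=
          abs_real_inner_le_norm _ _
      _ ≤ (‖A (ℓ + m + 1)‖ * ‖v m‖) * ‖v m‖ :=
          mul_le_mul_of_nonneg_right ((A (ℓ + m + 1)).le_opNorm _) (norm_nonneg _)
      _ ≤ C * ‖v m‖ ^ 2 := by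
          have := hC (ℓ + m + 1) (by omega)
          have h0 : (0:ℝ) ≤ ‖v m‖ := norm_nonneg _
          nlinarith

lemma jinf_summable (hhbar : 0 < hbar)
    (hQper : ∀ j : ℕ, 1 ≤ j → Q (j + hbar) = Q j)
    (hRper : ∀ j : ℕ, 1 ≤ j → R (j + hbar) = R j)
    (ℓ : ℕ) (x0 : H) (u : ℕ → U) (hu : u ∈ UadFrom T t hbar B ℓ x0) :
    Summable (fun m : ℕ =>
      ⟪Q (ℓ + m + 1) (xtrajFrom T t hbar B ℓ x0 u (m + 1)),
          xtrajFrom T t hbar B ℓ x0 u (m + 1)⟫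
        + ⟪R (ℓ + m + 1) (u (ℓ + m + 1)), u (ℓ + m + 1)⟫) := by
  obtain ⟨CQ, hCQ⟩ := periodic_norm_bound hhbar Q hQper
  obtain ⟨CR, hCR⟩ := periodic_norm_bound hhbar R hRper
  obtain ⟨husum, hxsum⟩ := hu
  exact (summable_inner_of_bound Q CQ hCQ ℓ _ hxsum).add
    (summable_inner_of_bound R CR hCR ℓ (fun m => u (ℓ + m + 1)) husum)

lemma jinf_nonneg
    (hQn : ∀ j : ℕ, 1 ≤ j → ∀ x : H, 0 ≤ ⟪Q j x, x⟫)
    (hRn : ∀ j : ℕ, 1 ≤ j → ∀ v : U, 0 ≤ ⟪R j v, v⟫)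
    (ℓ : ℕ) (x0 : H) (u : ℕ → U) : 0 ≤ Jinf T t hbar B Q R ℓ x0 u :=
  tsum_nonneg fun m => add_nonneg (hQn _ (by omega) _) (hRn _ (by omega) _)

lemma uad_tail (ℓ : ℕ) (x0 : H) (u : ℕ → U) (hu : u ∈ UadFrom T t hbar B ℓ x0) :
    u ∈ UadFrom T t hbar B (ℓ + 1) (xplusFrom T t hbar B ℓ x0 u 1) := by
  obtain ⟨husum, hxsum⟩ := hu
  constructor
  · exact ((summable_nat_add_iff 1).mpr husum).congr
      (fun j => by rw [show ℓ + (j + 1) + 1 = ℓ + 1 + j + 1 by omega])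
  · exact ((summable_nat_add_iff 1).mpr hxsum).congr
      (fun j => by rw [show j + 1 + 1 = 1 + j + 1 by omega, xtrajFrom_restart])

lemma jinf_split (hhbar : 0 < hbar)
    (hQper : ∀ j : ℕ, 1 ≤ j → Q (j + hbar) = Q j)
    (hRper : ∀ j : ℕ, 1 ≤ j → R (j + hbar) = R j)
    (ℓ : ℕ) (x0 : H) (u : ℕ → U) (hu : u ∈ UadFrom T t hbar B ℓ x0) :
    Jinf T t hbar B Q R ℓ x0 u =
      (⟪Q (ℓ + 1) (xtrajFrom T t hbar B ℓ x0 u 1), xtrajFrom T t hbar B ℓ x0 u 1⟫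
        + ⟪R (ℓ + 1) (u (ℓ + 1)), u (ℓ + 1)⟫)
      + Jinf T t hbar B Q R (ℓ + 1) (xplusFrom T t hbar B ℓ x0 u 1) u := by
  have hsum := jinf_summable T t hbar B Q R hhbar hQper hRper ℓ x0 u hu
  unfold Jinf
  rw [Summable.tsum_eq_zero_add hsum]
  congr 1
  apply tsum_congr
  intro m
  have e1 : ℓ + (m + 1) + 1 = ℓ + 1 + m + 1 := by omega
  have e2 : m + 1 + 1 = 1 + m + 1 := by omega
  rw [e1, e2, xtrajFrom_restart]

lemma jinf_congr_control (ℓ : ℕ) (x0 : H) (u u' : ℕ → U)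
    (h : ∀ j, ℓ + 1 ≤ j → u j = u' j) :
    Jinf T t hbar B Q R ℓ x0 u = Jinf T t hbar B Q R ℓ x0 u' := by
  unfold Jinf
  apply tsum_congr
  intro m
  rw [xtrajFrom_congr T t hbar B ℓ x0 u u' h (m + 1), h _ (by omega)]

lemma uad_congr_control (ℓ : ℕ) (x0 : H) (u u' : ℕ → U)
    (h : ∀ j, ℓ + 1 ≤ j → u j = u' j) (hu : u ∈ UadFrom T t hbar B ℓ x0) :
    u' ∈ UadFrom T t hbar B ℓ x0 := by
  obtain ⟨husum, hxsum⟩ := hu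
  constructor
  · exact husum.congr (fun j => by rw [h _ (by omega)])
  · exact hxsum.congr (fun j => by rw [xtrajFrom_congr T t hbar B ℓ x0 u u' h (j + 1)])

/-- nonemptiness of the admissible set at any starting index `ℓ ≤ ħ` -/
lemma uad_nonempty_all (hT0 : T 0 = 1)
    (hTadd : ∀ a b : ℝ, 0 ≤ a → 0 ≤ b → T (a + b) = T a ∘L T b)
    (htmono : StrictMono t) (htper : ∀ j : ℕ, t (j + hbar) = t j + t hbar)
    (hAd : ∀ x0 : H, (UadFrom T t hbar B 0 x0).Nonempty)
    (ℓ : ℕ) (hℓ : ℓ ≤ hbar) (x0 : H) : (UadFrom T t hbar B ℓ x0).Nonempty := by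
  set y := T (t hbar - t ℓ) x0 with hy
  obtain ⟨w, hwsum, hwx⟩ := hAd y
  set u : ℕ → U := fun j => if j ≤ hbar then 0 else w (j - hbar) with hudef
  have hu0 : ∀ j, ℓ < j → j ≤ hbar → u j = 0 := fun j _ hj => by simp [hudef, hj]
  have hcoast : xplusFrom T t hbar B ℓ x0 u (hbar - ℓ) = y := by
    rw [xplusFrom_coast T t hbar B hT0 hTadd htmono ℓ x0 u hu0 (hbar - ℓ) (by omega),
      show ℓ + (hbar - ℓ) = hbar by omega]
  have htail : ∀ m : ℕ, xtrajFrom T t hbar B ℓ x0 u ((hbar - ℓ) + m + 1) =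
      xtrajFrom T t hbar B 0 y w (m + 1) := by
    intro m
    rw [xtrajFrom_restart, hcoast, show ℓ + (hbar - ℓ) = 0 + hbar by omega,
      xtrajFrom_shift T t hbar B htper]
    apply xtrajFrom_congr
    intro j hj
    simp only [hudef]
    rw [if_neg (by omega), show j + hbar - hbar = j by omega]
  have hwsum' : Summable (fun j : ℕ => ‖w (j + 1)‖ ^ 2) :=
    hwsum.congr (fun j => by rw [Nat.zero_add])
  have h1 : ∀ j : ℕ, u (ℓ + (j + (hbar - ℓ)) + 1) = w (j + 1) := by
    intro j
    rw [hudef]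
    simp only
    rw [if_neg (by omega), show ℓ + (j + (hbar - ℓ)) + 1 - hbar = j + 1 by omega]
  have h2 : ∀ j : ℕ, xtrajFrom T t hbar B ℓ x0 u (j + (hbar - ℓ) + 1) =
      xtrajFrom T t hbar B 0 y w (j + 1) := by
    intro j
    rw [show j + (hbar - ℓ) + 1 = (hbar - ℓ) + j + 1 by omega]
    exact htail j
  refine ⟨u, ?_, ?_⟩
  · exact (summable_nat_add_iff (hbar - ℓ)).mp (hwsum'.congr (fun j => by rw [h1 j]))
  · exact (summable_nat_add_iff (hbar - ℓ)).mp (hwx.congr (fun j => by rw [h2 j]))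

lemma vinf_le_jinf
    (hQn : ∀ j : ℕ, 1 ≤ j → ∀ x : H, 0 ≤ ⟪Q j x, x⟫)
    (hRn : ∀ j : ℕ, 1 ≤ j → ∀ v : U, 0 ≤ ⟪R j v, v⟫)
    (ℓ : ℕ) (x0 : H) (u : ℕ → U) (hu : u ∈ UadFrom T t hbar B ℓ x0) :
    Vinf T t hbar B Q R ℓ x0 ≤ Jinf T t hbar B Q R ℓ x0 u := by
  apply csInf_le
  · refine ⟨0, ?_⟩
    rintro c ⟨u', _, rfl⟩
    exact jinf_nonneg T t hbar B Q R hQn hRn ℓ x0 u'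
  · exact ⟨u, hu, rfl⟩

lemma le_vinf (c : ℝ) (ℓ : ℕ) (x0 : H) (hne : (UadFrom T t hbar B ℓ x0).Nonempty)
    (h : ∀ u ∈ UadFrom T t hbar B ℓ x0, c ≤ Jinf T t hbar B Q R ℓ x0 u) :
    c ≤ Vinf T t hbar B Q R ℓ x0 := by
  apply le_csInf
  · obtain ⟨u, hu⟩ := hne
    exact ⟨_, u, hu, rfl⟩
  · rintro b ⟨u, hu, rfl⟩
    exact h u hu

lemma vinf_exists_lt
    (hQn : ∀ j : ℕ, 1 ≤ j → ∀ x : H, 0 ≤ ⟪Q j x, x⟫)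
    (hRn : ∀ j : ℕ, 1 ≤ j → ∀ v : U, 0 ≤ ⟪R j v, v⟫)
    (ℓ : ℕ) (x0 : H) (hne : (UadFrom T t hbar B ℓ x0).Nonempty)
    (ε : ℝ) (hε : 0 < ε) :
    ∃ u ∈ UadFrom T t hbar B ℓ x0,
      Jinf T t hbar B Q R ℓ x0 u < Vinf T t hbar B Q R ℓ x0 + ε := by
  have hlt : Vinf T t hbar B Q R ℓ x0 < Vinf T t hbar B Q R ℓ x0 + ε :=
    lt_add_of_pos_right _ hε
  have hsetne : {c : ℝ | ∃ u ∈ UadFrom T t hbar B ℓ x0,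
      c = Jinf T t hbar B Q R ℓ x0 u}.Nonempty := by
    obtain ⟨u, hu⟩ := hne
    exact ⟨_, u, hu, rfl⟩
  obtain ⟨c, hc, hclt⟩ := exists_lt_of_csInf_lt hsetne hlt
  obtain ⟨u, hu, rfl⟩ := hc
  exact ⟨u, hu, hclt⟩

end CostLemmas

section ShiftLemmas

variable (T : ℝ → H →L[ℝ] H) (t : ℕ → ℝ) (hbar : ℕ) (B : ℕ → U →L[ℝ] H)
  (Q : ℕ → H →L[ℝ] H) (R : ℕ → U →L[ℝ] U)

lemma jinf_shift (htper : ∀ j : ℕ, t (j + hbar) = t j + t hbar)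
    (hQper : ∀ j : ℕ, 1 ≤ j → Q (j + hbar) = Q j)
    (hRper : ∀ j : ℕ, 1 ≤ j → R (j + hbar) = R j)
    (ℓ : ℕ) (x0 : H) (u : ℕ → U) :
    Jinf T t hbar B Q R (ℓ + hbar) x0 u =
      Jinf T t hbar B Q R ℓ x0 (fun j => u (j + hbar)) := by
  unfold Jinf
  apply tsum_congr
  intro m
  rw [xtrajFrom_shift T t hbar B htper ℓ x0 u (m + 1)]
  have e1 : ℓ + hbar + m + 1 = ℓ + m + 1 + hbar := by omega
  rw [e1, hQper _ (by omega), hRper _ (by omega)]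

lemma uad_shift (htper : ∀ j : ℕ, t (j + hbar) = t j + t hbar) (ℓ : ℕ) (x0 : H) (u : ℕ → U) :
    u ∈ UadFrom T t hbar B (ℓ + hbar) x0 ↔
      (fun j => u (j + hbar)) ∈ UadFrom T t hbar B ℓ x0 := by
  unfold UadFrom
  simp only [Set.mem_setOf_eq]
  constructor
  · rintro ⟨h1, h2⟩
    refine ⟨h1.congr (fun j => by rw [show ℓ + hbar + j + 1 = ℓ + j + 1 + hbar by omega]), ?_⟩
    exact h2.congr (fun j => by rw [xtrajFrom_shift T t hbar B htper ℓ x0 u (j + 1)])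
  · rintro ⟨h1, h2⟩
    refine ⟨h1.congr (fun j => by rw [show ℓ + j + 1 + hbar = ℓ + hbar + j + 1 by omega]), ?_⟩
    exact h2.congr (fun j => by rw [← xtrajFrom_shift T t hbar B htper ℓ x0 u (j + 1)])

lemma vinf_shift (htper : ∀ j : ℕ, t (j + hbar) = t j + t hbar)
    (hQper : ∀ j : ℕ, 1 ≤ j → Q (j + hbar) = Q j)
    (hRper : ∀ j : ℕ, 1 ≤ j → R (j + hbar) = R j)
    (ℓ : ℕ) (x0 : H) :
    Vinf T t hbar B Q R (ℓ + hbar) x0 = Vinf T t hbar B Q R ℓ x0 := by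
  unfold Vinf
  congr 1
  ext c
  simp only [Set.mem_setOf_eq]
  constructor
  · rintro ⟨u, hu, rfl⟩
    exact ⟨fun j => u (j + hbar), (uad_shift T t hbar B htper ℓ x0 u).mp hu,
      (jinf_shift T t hbar B Q R htper hQper hRper ℓ x0 u).symm ▸
        (jinf_shift T t hbar B Q R htper hQper hRper ℓ x0 u)⟩
  · rintro ⟨v, hv, rfl⟩
    refine ⟨fun j => v (j - hbar), ?_, ?_⟩
    · have hσ : (fun j => (fun i => v (i - hbar)) (j + hbar)) = v := by
        funext j; simp only; rw [show j + hbar - hbar = j by omega]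
      rw [uad_shift T t hbar B htper ℓ x0, hσ]
      exact hv
    · have hσ : (fun j => (fun i => v (i - hbar)) (j + hbar)) = v := by
        funext j; simp only; rw [show j + hbar - hbar = j by omega]
      rw [jinf_shift T t hbar B Q R htper hQper hRper ℓ x0, hσ]

end ShiftLemmas

/-- a symmetric coercive bounded operator on a real Hilbert space has a bounded two-sided
inverse -/
lemma exists_inverse_of_coercive {E : Type*} [NormedAddCommGroup E] [InnerProductSpace ℝ E]
    [CompleteSpace E] (A : E →L[ℝ] E)
    (hsym : ∀ x y : E, ⟪A x, y⟫ = ⟪x, A y⟫)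
    (hco : ∃ δ : ℝ, 0 < δ ∧ ∀ x : E, δ * ‖x‖ ^ 2 ≤ ⟪A x, x⟫) :
    ∃ G : E →L[ℝ] E, G ∘L A = 1 ∧ A ∘L G = 1 := by
  obtain ⟨δ, hδ, hδle⟩ := hco
  have hbb : ∀ x : E, δ * ‖x‖ ≤ ‖A x‖ := by
    intro x
    rcases eq_or_ne x 0 with rfl | hx
    · simp
    · have h1 : δ * ‖x‖ ^ 2 ≤ ‖A x‖ * ‖x‖ :=
        le_trans (hδle x) (real_inner_le_norm _ _)
      have h2 : 0 < ‖x‖ := norm_pos_iff.mpr hx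
      nlinarith
  have hanti : AntilipschitzWith (⟨δ⁻¹, by positivity⟩ : NNReal) A := by
    apply ContinuousLinearMap.antilipschitz_of_bound
    intro x
    have := hbb x
    have h3 : (0:ℝ) < δ⁻¹ := by positivity
    calc ‖x‖ = δ⁻¹ * (δ * ‖x‖) := by field_simp
      _ ≤ δ⁻¹ * ‖A x‖ := by nlinarith [hbb x]
  have hker : LinearMap.ker (A : E →ₗ[ℝ] E) = ⊥ := by
    rw [LinearMap.ker_eq_bot]
    exact hanti.injective
  have hclosed : IsClosed (LinearMap.range (A : E →ₗ[ℝ] E) : Set E) :=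
    hanti.isClosed_range A.uniformContinuous
  have hrange : LinearMap.range (A : E →ₗ[ℝ] E) = ⊤ := by
    haveI := hclosed.completeSpace_coe
    rw [← (LinearMap.range (A : E →ₗ[ℝ] E)).orthogonal_orthogonal]
    rw [Submodule.eq_top_iff']
    intro v w hw
    have hw0 : w = 0 := by
      have h0 : ⟪A w, w⟫ = 0 := hw (A w) ⟨w, rfl⟩
      have := hδle w
      have hn : (0:ℝ) ≤ ‖w‖ ^ 2 := by positivity
      have : δ * ‖w‖ ^ 2 ≤ 0 := by rw [← h0]; exact hδle w
      have hz : ‖w‖ ^ 2 = 0 := by nlinarith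
      have : ‖w‖ = 0 := by nlinarith
      exact norm_eq_zero.mp this
    rw [hw0]
    exact inner_zero_left _
  set e := ContinuousLinearEquiv.ofBijective A hker hrange with he
  have heA : ∀ x, e x = A x := fun x => rfl
  refine ⟨(e.symm : E →L[ℝ] E), ?_, ?_⟩
  · ext x
    simp only [ContinuousLinearMap.comp_apply, ContinuousLinearMap.one_apply,
      ContinuousLinearMap.coe_coe]
    rw [← heA x]
    exact e.symm_apply_apply x
  · ext x
    simp only [ContinuousLinearMap.comp_apply, ContinuousLinearMap.one_apply,
      ContinuousLinearMap.coe_coe]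
    exact e.apply_symm_apply x



end Aux


/-- Proposition 2.7: the operators representing the infinite-horizon value functions solve the
periodic Riccati-type equation (in particular `P_0 = P_ħ`). -/
theorem value_operators_solve_riccati
    {H U : Type*} [NormedAddCommGroup H] [InnerProductSpace ℝ H]
    [CompleteSpace H] [NormedAddCommGroup U] [InnerProductSpace ℝ U] [CompleteSpace U]
    (T : ℝ → H →L[ℝ] H) (hT0 : T 0 = 1)
    (hTadd : ∀ a b : ℝ, 0 ≤ a → 0 ≤ b → T (a + b) = T a ∘L T b)
    (hTcont : ∀ x : H, ContinuousOn (fun τ : ℝ => T τ x) (Set.Ici (0 : ℝ)))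
    (hbar : ℕ) (hhbar : 0 < hbar)
    (t : ℕ → ℝ) (ht0 : t 0 = 0) (htmono : StrictMono t)
    (htper : ∀ j : ℕ, t (j + hbar) = t j + t hbar)
    (B : ℕ → U →L[ℝ] H)
    (Q : ℕ → H →L[ℝ] H) (R : ℕ → U →L[ℝ] U)
    (hQ : MemMCoercive hbar Q) (hR : MemMCoercive hbar R)
    (hAd : ∀ x0 : H, (UadFrom T t hbar B 0 x0).Nonempty)
    (P : ℕ → H →L[ℝ] H)
    (hrep : ∀ ℓ : ℕ, ℓ ≤ hbar → IsNonnegOp (P ℓ) ∧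
      ∀ x0 : H, Vinf T t hbar B Q R ℓ x0 = ⟪P ℓ x0, x0⟫) :
    IsRicSol T t hbar B Q R P := by
  have hQn : ∀ j : ℕ, 1 ≤ j → ∀ x : H, 0 ≤ ⟪Q j x, x⟫ := fun j hj x => (hQ.1 j hj).1.2 x
  have hRn : ∀ j : ℕ, 1 ≤ j → ∀ v : U, 0 ≤ ⟪R j v, v⟫ := fun j hj v => (hR.1 j hj).1.2 v
  have hQper := hQ.2
  have hRper := hR.2
  have hne : ∀ ℓ : ℕ, ℓ ≤ hbar → ∀ x0 : H, (UadFrom T t hbar B ℓ x0).Nonempty :=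
    fun ℓ hℓ x0 => uad_nonempty_all T t hbar B hT0 hTadd htmono htper hAd ℓ hℓ x0
  refine ⟨fun k hk => (hrep k hk).1, ?_, ?_⟩
  · -- P 0 = P hbar
    apply eq_of_sym_forms _ _ (sym_of_selfAdjoint (hrep 0 (by omega)).1.1)
      (sym_of_selfAdjoint (hrep hbar le_rfl).1.1)
    intro x0
    rw [← (hrep 0 (by omega)).2 x0, ← (hrep hbar le_rfl).2 x0]
    have := vinf_shift T t hbar B Q R htper hQper hRper 0 x0
    rw [Nat.zero_add] at this
    exact this.symm
  · -- the Riccati equations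
    intro k hk1 hk2
    have hℓhbar : k - 1 ≤ hbar := by omega
    have hℓk : k - 1 + 1 = k := by omega
    have hPk := (hrep k hk2).1
    have hPksym := sym_of_selfAdjoint hPk.1
    have hRksym := sym_of_selfAdjoint (hR.1 k hk1).1.1
    have hQksym := sym_of_selfAdjoint (hQ.1 k hk1).1.1
    set Tk := T (t k - t (k - 1)) with hTk
    set Aop := R k + adj (B k) ∘L P k ∘L B k with hAop
    have hAapp : ∀ v : U, Aop v = R k v + adj (B k) (P k (B k v)) := by
      intro v
      simp [hAop, ContinuousLinearMap.add_apply, ContinuousLinearMap.comp_apply]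
    have hadjB : ∀ (x : H) (v : U), ⟪adj (B k) x, v⟫ = ⟪x, B k v⟫ := fun x v =>
      ContinuousLinearMap.adjoint_inner_left (B k) v x
    have hadjB' : ∀ (v : U) (x : H), ⟪B k v, x⟫ = ⟪v, adj (B k) x⟫ := fun v x =>
      (ContinuousLinearMap.adjoint_inner_right (B k) v x).symm
    have hadjT : ∀ (x y : H), ⟪adj Tk x, y⟫ = ⟪x, Tk y⟫ := fun x y =>
      ContinuousLinearMap.adjoint_inner_left Tk y x
    have hAsym : ∀ v v' : U, ⟪Aop v, v'⟫ = ⟪v, Aop v'⟫ := by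
      intro v v'
      rw [hAapp, hAapp, inner_add_left, inner_add_right, hRksym]
      congr 1
      rw [hadjB, hPksym, ← hadjB', real_inner_comm]
    have hAnn : ∀ v : U, 0 ≤ ⟪Aop v, v⟫ := by
      intro v
      rw [hAapp, inner_add_left, hadjB]
      exact add_nonneg (hRn k hk1 v) (hPk.2 (B k v))
    have hAco : ∃ δ : ℝ, 0 < δ ∧ ∀ v : U, δ * ‖v‖ ^ 2 ≤ ⟪Aop v, v⟫ := by
      obtain ⟨δ, hδ, hδle⟩ := (hR.1 k hk1).2
      refine ⟨δ, hδ, fun v => ?_⟩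
      rw [hAapp, inner_add_left, hadjB]
      have := hPk.2 (B k v)
      have := hδle v
      linarith
    obtain ⟨G, hGA, hAG⟩ := exists_inverse_of_coercive Aop hAsym hAco
    have hAGapp : ∀ v : U, Aop (G v) = v := by
      intro v
      have := ContinuousLinearMap.ext_iff.mp hAG v
      simpa using this
    have hGAapp : ∀ v : U, G (Aop v) = v := by
      intro v
      have := ContinuousLinearMap.ext_iff.mp hGA v
      simpa using this
    have hGsym : ∀ v v' : U, ⟪G v, v'⟫ = ⟪v, G v'⟫ := by
      intro v v'
      calc ⟪G v, v'⟫ = ⟪G v, Aop (G v')⟫ := by rw [hAGapp]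
        _ = ⟪Aop (G v), G v'⟫ := (hAsym _ _).symm
        _ = ⟪v, G v'⟫ := by rw [hAGapp]
    set Sop := adj Tk ∘L ((Q k + P k - P k ∘L B k ∘L G ∘L adj (B k) ∘L P k) ∘L Tk)
      with hSop
    have hSapp : ∀ x : H, Sop x =
        adj Tk (Q k (Tk x) + P k (Tk x) - P k (B k (G (adj (B k) (P k (Tk x)))))) := by
      intro x
      simp [hSop, ContinuousLinearMap.comp_apply, ContinuousLinearMap.add_apply,
        ContinuousLinearMap.sub_apply]
    -- quadratic form of Sop and symmetry
    have hWsym : ∀ a b : H, ⟪P k (B k (G (adj (B k) (P k a)))), b⟫ =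
        ⟪G (adj (B k) (P k a)), adj (B k) (P k b)⟫ := by
      intro a b
      rw [hPksym, real_inner_comm, ← hadjB', real_inner_comm]
    have hSinner : ∀ x y : H, ⟪Sop x, y⟫ =
        ⟪Q k (Tk x), Tk y⟫ + ⟪P k (Tk x), Tk y⟫
          - ⟪G (adj (B k) (P k (Tk x))), adj (B k) (P k (Tk y))⟫ := by
      intro x y
      rw [hSapp, hadjT, inner_sub_left, inner_add_left, hWsym]
    have hSsym : ∀ x y : H, ⟪Sop x, y⟫ = ⟪x, Sop y⟫ := by
      intro x y
      have h3 : ⟪x, Sop y⟫ = ⟪Sop y, x⟫ := real_inner_comm _ _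
      rw [hSinner, h3, hSinner]
      have eQ : ⟪Q k (Tk x), Tk y⟫ = ⟪Q k (Tk y), Tk x⟫ := by
        rw [hQksym, real_inner_comm]
      have eP : ⟪P k (Tk x), Tk y⟫ = ⟪P k (Tk y), Tk x⟫ := by
        rw [hPksym, real_inner_comm]
      have eG : ⟪G (adj (B k) (P k (Tk x))), adj (B k) (P k (Tk y))⟫ =
          ⟪G (adj (B k) (P k (Tk y))), adj (B k) (P k (Tk x))⟫ := by
        rw [hGsym, real_inner_comm]
      rw [eQ, eP, eG]
    -- the quadratic form of Sop
    have hSform : ∀ x0 : H, ⟪Sop x0, x0⟫ =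
        ⟪Q k (Tk x0), Tk x0⟫ + ⟪P k (Tk x0), Tk x0⟫
          - ⟪adj (B k) (P k (Tk x0)), G (adj (B k) (P k (Tk x0)))⟫ := by
      intro x0
      rw [hSinner, real_inner_comm (G _) _]
    -- completed square
    have hsquare0 : ∀ (y : H) (v : U),
        ⟪Q k y, y⟫ + ⟪R k v, v⟫ + ⟪P k (y + B k v), y + B k v⟫ =
          (⟪Q k y, y⟫ + ⟪P k y, y⟫ - ⟪adj (B k) (P k y), G (adj (B k) (P k y))⟫)
            + ⟪Aop (v + G (adj (B k) (P k y))), v + G (adj (B k) (P k y))⟫ := by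
      intro y v
      have e1 : ⟪P k y, B k v⟫ = ⟪adj (B k) (P k y), v⟫ := (hadjB _ _).symm
      have e2 : ⟪P k (B k v), y⟫ = ⟪adj (B k) (P k y), v⟫ := by
        rw [hPksym, real_inner_comm, e1]
      have h1 : ⟪P k (y + B k v), y + B k v⟫ =
          ⟪P k y, y⟫ + 2 * ⟪adj (B k) (P k y), v⟫ + ⟪P k (B k v), B k v⟫ := by
        rw [map_add, inner_add_left, inner_add_right, inner_add_right, e1, e2]
        ring
      have h2 : ⟪Aop v, v⟫ = ⟪R k v, v⟫ + ⟪P k (B k v), B k v⟫ := by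
        rw [hAapp, inner_add_left, hadjB]
      have h3 : ⟪Aop (v + G (adj (B k) (P k y))), v + G (adj (B k) (P k y))⟫ =
          ⟪Aop v, v⟫ + 2 * ⟪adj (B k) (P k y), v⟫
            + ⟪adj (B k) (P k y), G (adj (B k) (P k y))⟫ := by
        rw [map_add, inner_add_left, inner_add_right, inner_add_right]
        rw [hAsym v (G _), hAGapp, real_inner_comm v (adj (B k) (P k y))]
        ring
      rw [h1, h3, h2]
      ring
    have hsquare : ∀ (x0 : H) (v : U),
        ⟪Q k (Tk x0), Tk x0⟫ + ⟪R k v, v⟫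
            + ⟪P k (Tk x0 + B k v), Tk x0 + B k v⟫ =
          ⟪Sop x0, x0⟫ + ⟪Aop (v + G (adj (B k) (P k (Tk x0)))),
            v + G (adj (B k) (P k (Tk x0)))⟫ := by
      intro x0 v
      rw [hSform]
      exact hsquare0 (Tk x0) v
    -- inequality A : the value form is ≤ the cost of any one-step control
    have keyA : ∀ (x0 : H) (v : U), ⟪P (k - 1) x0, x0⟫ ≤
        ⟪Q k (Tk x0), Tk x0⟫ + ⟪R k v, v⟫
          + ⟪P k (Tk x0 + B k v), Tk x0 + B k v⟫ := by
      intro x0 v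
      apply le_of_forall_pos_le_add
      intro ε hε
      set y := Tk x0 with hy
      set x1v := y + B k v with hx1v
      obtain ⟨u', hu', hJu'⟩ := vinf_exists_lt T t hbar B Q R hQn hRn k x1v
        (hne k hk2 x1v) ε hε
      set uu := Function.update u' k v with huu
      have hagree : ∀ j, k + 1 ≤ j → uu j = u' j := fun j hj =>
        Function.update_of_ne (by omega) _ _
      have huuk : uu k = v := Function.update_self _ _ _
      have hplus1 : xplusFrom T t hbar B (k - 1) x0 uu 1 = x1v := by
        rw [show (1:ℕ) = 0 + 1 from rfl, xplusFrom_succ]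
        simp only [Nat.add_zero, hℓk]
        rw [nu_eq_self hk1 hk2, huuk]
        rfl
      have htraj1 : xtrajFrom T t hbar B (k - 1) x0 uu 1 = y := by
        rw [show (1:ℕ) = 0 + 1 from rfl, xtrajFrom_succ]
        simp only [Nat.add_zero, hℓk]
        rfl
      have huu_tail : uu ∈ UadFrom T t hbar B k x1v :=
        uad_congr_control T t hbar B k x1v u' uu (fun j hj => (hagree j hj).symm) hu'
      have huuad : uu ∈ UadFrom T t hbar B (k - 1) x0 := by
        constructor
        · apply (summable_nat_add_iff 1).mp
          exact huu_tail.1.congr (fun j => by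
            rw [show k + j + 1 = k - 1 + (j + 1) + 1 by omega])
        · apply (summable_nat_add_iff 1).mp
          refine huu_tail.2.congr (fun j => ?_)
          rw [show j + 1 + 1 = 1 + j + 1 by omega, xtrajFrom_restart, hplus1, hℓk]
      have hsplit := jinf_split T t hbar B Q R hhbar hQper hRper (k - 1) x0 uu huuad
      rw [hℓk, htraj1, huuk, hplus1] at hsplit
      have hJc : Jinf T t hbar B Q R k x1v uu = Jinf T t hbar B Q R k x1v u' :=
        jinf_congr_control T t hbar B Q R k x1v uu u' hagree
      have hVle := vinf_le_jinf T t hbar B Q R hQn hRn (k - 1) x0 uu huuad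
      rw [(hrep (k - 1) hℓhbar).2 x0] at hVle
      rw [(hrep k hk2).2 x1v] at hJu'
      rw [hsplit, hJc] at hVle
      linarith
    -- inequality B : the value form is ≥ the form of Sop
    have keyB : ∀ x0 : H, ⟪Sop x0, x0⟫ ≤ ⟪P (k - 1) x0, x0⟫ := by
      intro x0
      rw [← (hrep (k - 1) hℓhbar).2 x0]
      apply le_vinf T t hbar B Q R _ _ _ (hne (k - 1) hℓhbar x0)
      intro u hu
      have hsplit := jinf_split T t hbar B Q R hhbar hQper hRper (k - 1) x0 u hu
      have htail := uad_tail T t hbar B (k - 1) x0 u hu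
      have htraj1 : xtrajFrom T t hbar B (k - 1) x0 u 1 = Tk x0 := by
        rw [show (1:ℕ) = 0 + 1 from rfl, xtrajFrom_succ]
        simp only [Nat.add_zero, hℓk]
        rfl
      have hplus1 : xplusFrom T t hbar B (k - 1) x0 u 1 = Tk x0 + B k (u k) := by
        rw [show (1:ℕ) = 0 + 1 from rfl, xplusFrom_succ]
        simp only [Nat.add_zero, hℓk]
        rw [nu_eq_self hk1 hk2]
        rfl
      rw [hℓk, htraj1, hplus1] at hsplit
      rw [hℓk, hplus1] at htail
      have hVle := vinf_le_jinf T t hbar B Q R hQn hRn k (Tk x0 + B k (u k)) u htail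
      rw [(hrep k hk2).2 (Tk x0 + B k (u k))] at hVle
      have hsq := hsquare x0 (u k)
      have hpos := hAnn (u k + G (adj (B k) (P k (Tk x0))))
      rw [hsplit]
      linarith
    -- conclude the operator identity
    have hPS : P (k - 1) = Sop := by
      apply eq_of_sym_forms _ _ (sym_of_selfAdjoint (hrep (k - 1) hℓhbar).1.1) hSsym
      intro x0
      apply le_antisymm
      · have := keyA x0 (-(G (adj (B k) (P k (Tk x0)))))
        have hsq := hsquare x0 (-(G (adj (B k) (P k (Tk x0)))))
        rw [neg_add_cancel] at hsq
        simp only [inner_zero_right, map_zero, add_zero] at hsq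
        linarith
      · exact keyB x0
    refine ⟨G, hGA, hAG, ?_⟩
    rw [hPS, hSop]
    ext x
    simp only [ContinuousLinearMap.comp_apply, ContinuousLinearMap.sub_apply,
      ContinuousLinearMap.add_apply, map_add, map_sub]
    abel

end ImpulseControl
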